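/- Fix σ_a ∈ ℝ with 0 < σ_a² < 1, let f(x) = (√(1−x²) + (π − arccos x)·x)/π, and let g : [−1,1] → [−1,1] send t to the unique fixed point of x = σ_a²·f(x) + (1−σ_a²)·t. Then g is differentiable on (−1,1) with g′(t) = (1−σ_a²)/(1 − σ_a²·f′(g(t))) for every t ∈ (−1,1), where f′(x) = (π − arccos x)/π; in particular, writing ∠* = g(0), one has g′(0) = (1−σ_a²)/(1 − σ_a²·f′(∠*)). -/

import Mathlib

/-!
The map `k x = (x - s·f x)/(1 - s)` undoes `g` on `[-1, 1]`. Since `f' ≤ 1` and `s ≥ 0`, `k` increases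
at rate at least `1`, so `g` is `1`-Lipschitz, hence continuous, and `k' = (1 - s·f')/(1 - s) > 0`
inside `(-1, 1)`; the inverse function theorem then gives `g' = 1/k'(g t)`. The point `g t` stays
inside `(-1, 1)` because `f (-1) = 0` and `f 1 = 1` make `±1` incompatible with `|t| < 1`.
-/

open Real Set

/-- The dual kernel of the normalized ReLU activation `φ(x) = √2·max(x,0)`. -/
noncomputable def fDual (x : ℝ) : ℝ :=
  (Real.sqrt (1 - x ^ 2) + (Real.pi - Real.arccos x) * x) / Real.pi

/-- The derivative `f′(x) = (π − arccos x)/π` of the dual kernel. -/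
noncomputable def fDual' (x : ℝ) : ℝ := (Real.pi - Real.arccos x) / Real.pi

lemma continuous_fDual : Continuous fDual := by
  unfold fDual
  fun_prop

lemma fDual_neg_one : fDual (-1) = 0 := by
  simp [fDual, arccos_neg_one]

lemma fDual_one : fDual 1 = 1 := by
  simp [fDual, arccos_one, pi_ne_zero]

lemma fDual'_le_one (x : ℝ) : fDual' x ≤ 1 := by
  rw [fDual', div_le_one pi_pos]
  linarith [arccos_nonneg x]

lemma hasDerivAt_fDual {x : ℝ} (hx : x ∈ Ioo (-1 : ℝ) 1) :
    HasDerivAt fDual (fDual' x) x := by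
  obtain ⟨h1, h2⟩ := hx
  have hpos : 0 < 1 - x ^ 2 := by nlinarith
  have hsqrt : HasDerivAt (fun x : ℝ => √(1 - x ^ 2)) (-(2 * x) / (2 * √(1 - x ^ 2))) x := by
    have : HasDerivAt (fun x : ℝ => 1 - x ^ 2) (-(2 * x)) x := by
      simpa using (hasDerivAt_pow 2 x).const_sub 1
    exact this.sqrt hpos.ne'
  have harccos : HasDerivAt arccos (-(1 / √(1 - x ^ 2))) x :=
    hasDerivAt_arccos (by linarith) (by linarith)
  refine ((hsqrt.add ((harccos.const_sub π).mul (hasDerivAt_id' x))).div_const π).congr_deriv ?_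
  have := (sqrt_pos.mpr hpos).ne'
  rw [fDual']
  field_simp
  ring

lemma fDual_sub_le {x y : ℝ} (hx : x ∈ Icc (-1 : ℝ) 1) (hy : y ∈ Icc (-1 : ℝ) 1) (hxy : x ≤ y) :
    fDual y - fDual x ≤ y - x := by
  have hderiv : ∀ z ∈ interior (Icc (-1 : ℝ) 1), HasDerivAt fDual (fDual' z) z := by
    rw [interior_Icc]
    exact fun z hz => hasDerivAt_fDual hz
  have := (convex_Icc (-1 : ℝ) 1).image_sub_le_mul_sub_of_deriv_le
    continuous_fDual.continuousOn (fun z hz => (hderiv z hz).differentiableAt.differentiableWithinAt)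
    (fun z hz => (hderiv z hz).deriv ▸ fDual'_le_one z) x hx y hy hxy
  linarith

/-- For `s = σ_a²` this is the conjugate kernel map of the implicit ReLU network. -/
def IsConjugateKernelMap (s : ℝ) (g : ℝ → ℝ) : Prop :=
  ∀ t ∈ Icc (-1 : ℝ) 1, g t ∈ Icc (-1 : ℝ) 1 ∧ g t = s * fDual (g t) + (1 - s) * t

namespace IsConjugateKernelMap

variable {s : ℝ} {g : ℝ → ℝ}

lemma lipschitzOnWith (hg : IsConjugateKernelMap s g) (hs0 : 0 ≤ s) (hs1 : s < 1) :
    LipschitzOnWith 1 g (Icc (-1 : ℝ) 1) := by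
  have key : ∀ a ∈ Icc (-1 : ℝ) 1, ∀ b ∈ Icc (-1 : ℝ) 1, g a ≤ g b → g b - g a ≤ b - a := by
    intro a ha b hb hab
    obtain ⟨hga, ha_eq⟩ := hg a ha
    obtain ⟨hgb, hb_eq⟩ := hg b hb
    have hf := fDual_sub_le hga hgb hab
    nlinarith
  refine LipschitzOnWith.mk_one fun a ha b hb => ?_
  rw [dist_comm, dist_comm a]
  rcases le_total (g a) (g b) with hab | hba
  · exact abs_le_abs_of_nonneg (sub_nonneg.mpr hab) (key a ha b hb hab)
  · rw [dist_comm, dist_comm b]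
    exact abs_le_abs_of_nonneg (sub_nonneg.mpr hba) (key b hb a ha hba)

lemma mem_Ioo (hg : IsConjugateKernelMap s g) (hs0 : 0 ≤ s) (hs1 : s < 1) {t : ℝ}
    (ht : t ∈ Ioo (-1 : ℝ) 1) : g t ∈ Ioo (-1 : ℝ) 1 := by
  obtain ⟨⟨hlo, hhi⟩, heq⟩ := hg t (Ioo_subset_Icc_self ht)
  obtain ⟨ht1, ht2⟩ := ht
  refine ⟨lt_of_le_of_ne hlo fun h => ?_, lt_of_le_of_ne hhi fun h => ?_⟩
  · rw [← h, fDual_neg_one] at heq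
    nlinarith
  · rw [h, fDual_one] at heq
    nlinarith

lemma hasDerivAt (hg : IsConjugateKernelMap s g) (hs0 : 0 ≤ s) (hs1 : s < 1) {t : ℝ}
    (ht : t ∈ Ioo (-1 : ℝ) 1) : HasDerivAt g ((1 - s) / (1 - s * fDual' (g t))) t := by
  have hIcc : Icc (-1 : ℝ) 1 ∈ nhds t := Icc_mem_nhds ht.1 ht.2
  have hcont : ContinuousAt g t := (hg.lipschitzOnWith hs0 hs1).continuousOn.continuousAt hIcc
  set k : ℝ → ℝ := fun x => (x - s * fDual x) / (1 - s)
  have hk : HasDerivAt k ((1 - s * fDual' (g t)) / (1 - s)) (g t) :=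
    ((hasDerivAt_id _).sub ((hasDerivAt_fDual (hg.mem_Ioo hs0 hs1 ht)).const_mul s)).div_const _
  have hk_ne : (1 - s * fDual' (g t)) / (1 - s) ≠ 0 := by
    have := fDual'_le_one (g t)
    exact (div_pos (by nlinarith) (by linarith)).ne'
  have hkg : ∀ᶠ y in nhds t, k (g y) = y := by
    filter_upwards [hIcc] with y hy
    rw [div_eq_iff (by linarith)]
    linarith [(hg y hy).2]
  simpa only [inv_div] using HasDerivAt.of_local_left_inverse hcont hk hk_ne hkg

end IsConjugateKernelMap

theorem stmt_8_general (σa : ℝ) (hσ1 : σa ^ 2 < 1)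
    (g : ℝ → ℝ)
    (hg : ∀ t ∈ Set.Icc (-1 : ℝ) 1,
      g t ∈ Set.Icc (-1 : ℝ) 1 ∧ g t = σa ^ 2 * fDual (g t) + (1 - σa ^ 2) * t) :
    (∀ t ∈ Set.Ioo (-1 : ℝ) 1,
      HasDerivAt g ((1 - σa ^ 2) / (1 - σa ^ 2 * fDual' (g t))) t) ∧
    HasDerivAt g ((1 - σa ^ 2) / (1 - σa ^ 2 * fDual' (g 0))) 0 := by
  have hderiv : ∀ t ∈ Set.Ioo (-1 : ℝ) 1,
      HasDerivAt g ((1 - σa ^ 2) / (1 - σa ^ 2 * fDual' (g t))) t :=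
    fun t ht => IsConjugateKernelMap.hasDerivAt hg (sq_nonneg σa) hσ1 ht
  exact ⟨hderiv, hderiv 0 (by norm_num)⟩

theorem stmt_8 (σa : ℝ) (hσ0 : 0 < σa ^ 2) (hσ1 : σa ^ 2 < 1)
    (g : ℝ → ℝ)
    (hg : ∀ t ∈ Set.Icc (-1 : ℝ) 1,
      g t ∈ Set.Icc (-1 : ℝ) 1 ∧ g t = σa ^ 2 * fDual (g t) + (1 - σa ^ 2) * t) :
    (∀ t ∈ Set.Ioo (-1 : ℝ) 1,
      HasDerivAt g ((1 - σa ^ 2) / (1 - σa ^ 2 * fDual' (g t))) t) ∧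
    HasDerivAt g ((1 - σa ^ 2) / (1 - σa ^ 2 * fDual' (g 0))) 0 :=
  stmt_8_general σa hσ1 g hg
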